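/- Let B be an evolution algebra. Then there exists a linear map φ: B → B such that A^(1)(B, φ, b_0, k_0) is an evolution algebra. Specifically, taking any natural basis {u_i} of B, any nonzero x ∈ B, and φ(u_i) = −x u_i for all i, the set {(u_i, 0)} ∪ {(x, 1)} is a natural basis of A^(1)(B, φ, b_0, k_0). -/

import Mathlib

/-!
The vectors `(u i, 0)` and `(x, 1)` form the image of the standard basis of `B × K` under the
shear `(b, c) ↦ (b + c • x, c)`, so they form a basis. In `A¹(B, φ, b₀, k₀)` one has
`(b, 0)(b', 0) = (b b', 0)`, which vanishes on distinct `u i, u j` since `u` is natural, and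
`(x, 1)(b, 0) = (x b + φ b, 0)`, which vanishes on `b = u i` by the choice `φ (u i) = -(x u i)`.
-/

namespace EvolutionAlgebra

variable {K A B : Type*} [Field K] [AddCommGroup A] [Module K A] [AddCommGroup B] [Module K B]

/-- The multiplication of `A¹(B, φ, b₀, k₀) = B × K`:
`(b, λ)(b', λ') = (bb' + λ'φ(b) + λφ(b') + λλ'b₀, λλ'k₀)`. -/
def a1Mul (mulB : B →ₗ[K] B →ₗ[K] B) (φ : B →ₗ[K] B) (b₀ : B) (k₀ : K) :
    (B × K) →ₗ[K] (B × K) →ₗ[K] (B × K) :=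
  LinearMap.mk₂ K
    (fun p q => (mulB p.1 q.1 + q.2 • φ p.1 + p.2 • φ q.1 + (p.2 * q.2) • b₀, p.2 * q.2 * k₀))
    (fun p p' q => by
      simp only [Prod.fst_add, Prod.snd_add, map_add, LinearMap.add_apply, Prod.mk_add_mk,
        Prod.mk.injEq]
      constructor
      · simp only [add_smul, add_mul]; module
      · ring)
    (fun c p q => by
      simp only [Prod.smul_fst, Prod.smul_snd, map_smul, LinearMap.smul_apply, Prod.smul_mk,
        smul_eq_mul, Prod.mk.injEq]
      constructor
      · simp only [mul_assoc, mul_smul]; module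
      · ring)
    (fun p q q' => by
      simp only [Prod.fst_add, Prod.snd_add, map_add, LinearMap.add_apply, Prod.mk_add_mk,
        Prod.mk.injEq]
      constructor
      · simp only [add_smul, mul_add]; module
      · ring)
    (fun c p q => by
      simp only [Prod.smul_fst, Prod.smul_snd, map_smul, LinearMap.smul_apply, Prod.smul_mk,
        smul_eq_mul, Prod.mk.injEq]
      constructor
      · simp only [mul_smul]; module
      · ring)

section Shear

variable {R M ι : Type*} [Ring R] [AddCommGroup M] [Module R M]

def _root_.LinearEquiv.prodShear (x : M) : (M × R) ≃ₗ[R] (M × R) :=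
  ((LinearEquiv.prodComm R M R).trans
    ((LinearEquiv.refl R R).skewProd (LinearEquiv.refl R M) (LinearMap.toSpanSingleton R M x))).trans
    (LinearEquiv.prodComm R R M)

@[simp]
theorem _root_.LinearEquiv.prodShear_apply (x : M) (p : M × R) :
    LinearEquiv.prodShear x p = (p.1 + p.2 • x, p.2) :=
  rfl

noncomputable def _root_.Module.Basis.prodShear (u : Module.Basis ι R M) (x : M) :
    Module.Basis (Option ι) R (M × R) :=
  ((u.prod (Module.Basis.singleton Unit R)).map (LinearEquiv.prodShear x)).reindex
    (Equiv.optionEquivSumPUnit.{0} ι).symm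

@[simp]
theorem _root_.Module.Basis.prodShear_some (u : Module.Basis ι R M) (x : M) (i : ι) :
    u.prodShear x (some i) = (u i, 0) := by
  simp [Module.Basis.prodShear]

@[simp]
theorem _root_.Module.Basis.prodShear_none (u : Module.Basis ι R M) (x : M) :
    u.prodShear x none = (x, 1) := by
  simp [Module.Basis.prodShear]

end Shear

section A1

variable (mulB : B →ₗ[K] B →ₗ[K] B) (φ : B →ₗ[K] B) (b₀ : B) (k₀ : K)

theorem a1Mul_apply (p q : B × K) :
    a1Mul mulB φ b₀ k₀ p q =
      (mulB p.1 q.1 + q.2 • φ p.1 + p.2 • φ q.1 + (p.2 * q.2) • b₀, p.2 * q.2 * k₀) :=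
  rfl

theorem a1Mul_comm (hcomm : ∀ x y : B, mulB x y = mulB y x) (p q : B × K) :
    a1Mul mulB φ b₀ k₀ p q = a1Mul mulB φ b₀ k₀ q p := by
  simp only [a1Mul_apply, hcomm p.1, mul_comm p.2, Prod.mk.injEq, and_true]
  abel

@[simp]
theorem a1Mul_mk_zero_mk_zero (b b' : B) :
    a1Mul mulB φ b₀ k₀ (b, 0) (b', 0) = (mulB b b', 0) := by
  simp [a1Mul_apply]

@[simp]
theorem a1Mul_mk_one_mk_zero (x b : B) :
    a1Mul mulB φ b₀ k₀ (x, 1) (b, 0) = (mulB x b + φ b, 0) := by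
  simp [a1Mul_apply]

end A1

theorem stmt15_general {ι : Type*}
    (mulB : B →ₗ[K] B →ₗ[K] B) (hcomm : ∀ x y : B, mulB x y = mulB y x)
    (u : Module.Basis ι K B) (hnat : ∀ i j, i ≠ j → mulB (u i) (u j) = 0)
    (x : B)
    (φ : B →ₗ[K] B) (hφ : ∀ i, φ (u i) = -(mulB x (u i))) (b₀ : B) (k₀ : K) :
    ∃ v : Module.Basis (Option ι) K (B × K),
      (∀ i : ι, v (some i) = (u i, 0)) ∧ v none = (x, 1) ∧
      ∀ i j : Option ι, i ≠ j → a1Mul mulB φ b₀ k₀ (v i) (v j) = 0 := by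
  refine ⟨u.prodShear x, u.prodShear_some x, u.prodShear_none x, ?_⟩
  have hxu : ∀ i, a1Mul mulB φ b₀ k₀ (x, 1) (u i, 0) = 0 := fun i => by
    simp [hφ]
  rintro (_ | i) (_ | j) hij
  · exact (hij rfl).elim
  · simpa using hxu j
  · simpa [a1Mul_comm mulB φ b₀ k₀ hcomm (u i, 0)] using hxu i
  · simp [hnat i j (by simpa using hij)]

theorem stmt15 {ι : Type*}
    (mulB : B →ₗ[K] B →ₗ[K] B) (hcomm : ∀ x y : B, mulB x y = mulB y x)
    (u : Module.Basis ι K B) (hnat : ∀ i j, i ≠ j → mulB (u i) (u j) = 0)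
    (x : B) (hx : x ≠ 0)
    (φ : B →ₗ[K] B) (hφ : ∀ i, φ (u i) = -(mulB x (u i))) (b₀ : B) (k₀ : K) :
    ∃ v : Module.Basis (Option ι) K (B × K),
      (∀ i : ι, v (some i) = (u i, 0)) ∧ v none = (x, 1) ∧
      ∀ i j : Option ι, i ≠ j → a1Mul mulB φ b₀ k₀ (v i) (v j) = 0 :=
  stmt15_general mulB hcomm u hnat x φ hφ b₀ k₀

end EvolutionAlgebra
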